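/- arXiv:1903.11572 — 2 statements merged into one kernel-verified Lean document; each statement's English description precedes it below -/
import Mathlib

section
/- Let τ be a bounded function on [0,∞)² that is continuous at (0,0) with τ(0,0) = 1 and satisfies Assumption (A). Then for every bounded operator A on ℓ²(ℤ₊), τ_N ⋆ A converges to A in the strong operator topology as N → ∞; if moreover A is compact, then τ_N ⋆ A converges to A in operator norm. -/
open Complex Filter Topology MeasureTheory

noncomputable section

/-- ℓ²(ℤ₊) with complex scalars. -/
abbrev Hl2 : Type := lp (fun _ : ℕ => ℂ) 2
/-- Bounded operators on ℓ²(ℤ₊). -/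
abbrev OpH : Type := Hl2 →L[ℂ] Hl2
/-- ℓ²(ℤ) with complex scalars. -/
abbrev Hl2Z : Type := lp (fun _ : ℤ => ℂ) 2
/-- Bounded operators on ℓ²(ℤ). -/
abbrev OpZ : Type := Hl2Z →L[ℂ] Hl2Z

/-- Matrix entry `A_{j,k} = ⟨e_j, A e_k⟩` of an operator on ℓ²(ℤ₊). -/
def entry (A : OpH) (j k : ℕ) : ℂ :=
  (inner ℂ (lp.single 2 j (1 : ℂ)) (A (lp.single 2 k (1 : ℂ))) : ℂ)

/-- Matrix entry of an operator on ℓ²(ℤ). -/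
def entryZ (A : OpZ) (m n : ℤ) : ℂ :=
  (inner ℂ (lp.single 2 m (1 : ℂ)) (A (lp.single 2 n (1 : ℂ))) : ℂ)

/-- `approxNum A n` is the `n`-th approximation number of `A`, i.e. the distance of `A`
to operators of rank at most `n`; for a compact operator it is the singular value
`s_{n+1}(A)` (so `approxNum A 0 = s₁(A) = ‖A‖`). -/
def approxNum {E : Type*} [NormedAddCommGroup E] [NormedSpace ℂ E]
    (A : E →L[ℂ] E) (n : ℕ) : ℝ :=
  ⨅ F : {F : E →L[ℂ] E // Module.finrank ℂ (LinearMap.range F.toLinearMap) ≤ n},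
    ‖A - F.1‖

/-- Singular value counting function `n(t; A) = #{n : s_n(A) > t}`. -/
def countSV {E : Type*} [NormedAddCommGroup E] [NormedSpace ℂ E]
    (t : ℝ) (A : E →L[ℂ] E) : ℕ :=
  Set.ncard {n : ℕ | t < approxNum A n}

/-- Eigenvalue counting function `n₊(t;A)`: the maximal dimension of a subspace on which
the quadratic form of `A` is `> t‖x‖²` (Glazman's lemma). -/
def countPos {E : Type*} [NormedAddCommGroup E] [InnerProductSpace ℂ E]
    (t : ℝ) (A : E →L[ℂ] E) : ℕ :=
  ⨆ V : {V : Submodule ℂ E // ∀ x ∈ V, x ≠ 0 → t * ‖x‖ ^ 2 < ((inner ℂ x (A x) : ℂ)).re},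
    Module.finrank ℂ V.1

/-- Eigenvalue counting function `n₋(t;A) = n₊(t;-A)`. -/
def countNeg {E : Type*} [NormedAddCommGroup E] [InnerProductSpace ℂ E]
    (t : ℝ) (A : E →L[ℂ] E) : ℕ :=
  countPos t (-A)

/-- Membership in the Schatten class 𝔖_p: the p-th powers of singular values are summable. -/
def MemSp {E : Type*} [NormedAddCommGroup E] [NormedSpace ℂ E]
    (p : ℝ) (A : E →L[ℂ] E) : Prop :=
  Summable fun n => approxNum A n ^ p

/-- The Schatten norm `‖A‖_{𝔖_p} = (Σ s_n(A)^p)^{1/p}`. -/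
def schattenNorm {E : Type*} [NormedAddCommGroup E] [NormedSpace ℂ E]
    (p : ℝ) (A : E →L[ℂ] E) : ℝ :=
  (∑' n, approxNum A n ^ p) ^ (1 / p)

/-- Widom's density function `c(t) = π⁻² log((1+√(1-t²))/t)` on `(0,1]`, zero elsewhere. -/
def specDens (t : ℝ) : ℝ :=
  if 0 < t ∧ t ≤ 1 then (Real.pi ^ 2)⁻¹ * Real.log ((1 + Real.sqrt (1 - t ^ 2)) / t) else 0

/-- Fourier coefficient `ω̂(n)` of a symbol on the unit circle. -/
def fCoeff (ω : ℂ → ℂ) (n : ℤ) : ℂ :=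
  (∫ θ in (0:ℝ)..(2 * Real.pi),
      ω (Complex.exp ((θ : ℂ) * Complex.I)) * Complex.exp (-(n : ℂ) * (θ : ℂ) * Complex.I)) /
    ((2 * Real.pi : ℝ) : ℂ)

/-- `A` is the Hankel matrix `Γ(ω̂)` of the symbol `ω`: `A_{j,k} = ω̂(j+k)`. -/
def IsHankelOf (ω : ℂ → ℂ) (A : OpH) : Prop :=
  ∀ j k : ℕ, entry A j k = fCoeff ω ((j : ℤ) + (k : ℤ))

/-- `ω` is (essentially) bounded on the unit circle. -/
def BddSymbol (ω : ℂ → ℂ) : Prop :=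
  ∃ M : ℝ, ∀ z : ℂ, ‖z‖ = 1 → ‖ω z‖ ≤ M

/-- The rescaled multiplier `τ_N(x,y) = τ(x/N, y/N)`. -/
def scaleT (τ : ℝ → ℝ → ℂ) (N : ℕ) : ℝ → ℝ → ℂ := fun x y => τ (x / N) (y / N)

/-- `B` is the Schur–Hadamard product `σ ⋆ A`: entrywise `B_{j,k} = σ(j,k) A_{j,k}`. -/
def IsSchurMul (σ : ℝ → ℝ → ℂ) (A B : OpH) : Prop :=
  ∀ j k : ℕ, entry B j k = σ j k * entry A j k

/-- Assumption (A): `τ` induces a uniformly bounded Schur–Hadamard multiplier,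
`sup_N ‖τ_N‖_𝔐 < ∞`. -/
def AssumptionA (τ : ℝ → ℝ → ℂ) : Prop :=
  ∃ C : ℝ, ∀ N : ℕ, 1 ≤ N → ∀ A : OpH, ∃ B : OpH,
    IsSchurMul (scaleT τ N) A B ∧ ‖B‖ ≤ C * ‖A‖

/-- Assumption (B): `τ(0,0) = 1` and `|τ(x,y) - 1| ≤ C |log(x+y)|^{-β}` near the origin,
for some `β > 1/2`. -/
def AssumptionB (τ : ℝ → ℝ → ℂ) : Prop :=
  τ 0 0 = 1 ∧
    ∃ ε > (0 : ℝ), ∃ β > (1 / 2 : ℝ), ∃ C > (0 : ℝ), ∀ x y : ℝ,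
      0 ≤ x → x ≤ ε → 0 ≤ y → y ≤ ε →
        ‖τ x y - 1‖ ≤ C * |Real.log (x + y)| ^ (-β)

/-- Assumption (C): `|τ(x,y)| ≤ C log(x+y+2)^{-α}` for some `α > 1/2`. -/
def AssumptionC (τ : ℝ → ℝ → ℂ) : Prop :=
  ∃ α > (1 / 2 : ℝ), ∃ C > (0 : ℝ), ∀ x y : ℝ,
    0 ≤ x → 0 ≤ y → ‖τ x y‖ ≤ C * Real.log (x + y + 2) ^ (-α)

/-- `τ(x,y) = conj (τ(y,x))`. -/
def HermitianMult (τ : ℝ → ℝ → ℂ) : Prop :=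
  ∀ x y : ℝ, 0 ≤ x → 0 ≤ y → τ x y = starRingEnd ℂ (τ y x)

/-- The symmetry condition `ω(v) = conj (ω(v̄))` making the Hankel matrix self-adjoint. -/
def SymmetricSymbol (ω : ℂ → ℂ) : Prop :=
  ∀ v : ℂ, ‖v‖ = 1 → ω v = starRingEnd ℂ (ω (starRingEnd ℂ v))

/-- Self-adjointness of a bounded operator, via the inner product. -/
def SelfAdjointOp (A : OpH) : Prop :=
  ∀ x y : Hl2, (inner ℂ (A x) y : ℂ) = (inner ℂ x (A y) : ℂ)

/-- `ω` has one-sided limits `ωp z = ω(z+)`, `ωm z = ω(z-)` at every point of the circle;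
this is piecewise continuity of `ω`. -/
def OneSidedLimits (ω ωp ωm : ℂ → ℂ) : Prop :=
  ∀ z : ℂ, ‖z‖ = 1 →
    Tendsto (fun ε : ℝ => ω (z * Complex.exp ((ε : ℂ) * Complex.I))) (𝓝[>] 0) (𝓝 (ωp z)) ∧
    Tendsto (fun ε : ℝ => ω (z * Complex.exp (-(ε : ℂ) * Complex.I))) (𝓝[>] 0) (𝓝 (ωm z))

/-- Half-height of the jump, `κ_z(ω) = (ω(z+) - ω(z-))/2`. -/
def jumpHeight (ωp ωm : ℂ → ℂ) (z : ℂ) : ℂ := (ωp z - ωm z) / 2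

/-- The class `ℬ₀` of operators with entries `O(1/(j+k+1))`. -/
def MemB0 (A : OpH) : Prop :=
  ∃ M : ℝ, ∀ j k : ℕ, ((j : ℝ) + k + 1) * ‖entry A j k‖ ≤ M

/-- Upper logarithmic spectral density of the sequence of truncations `B N`. -/
def upperLD (t : ℝ) (B : ℕ → OpH) : ℝ :=
  limsup (fun N : ℕ => (countSV t (B N) : ℝ) / Real.log N) atTop

/-- Lower logarithmic spectral density. -/
def lowerLD (t : ℝ) (B : ℕ → OpH) : ℝ :=
  liminf (fun N : ℕ => (countSV t (B N) : ℝ) / Real.log N) atTop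

/-- Upper positive logarithmic spectral density. -/
def upperLDpos (t : ℝ) (B : ℕ → OpH) : ℝ :=
  limsup (fun N : ℕ => (countPos t (B N) : ℝ) / Real.log N) atTop

/-- Lower positive logarithmic spectral density. -/
def lowerLDpos (t : ℝ) (B : ℕ → OpH) : ℝ :=
  liminf (fun N : ℕ => (countPos t (B N) : ℝ) / Real.log N) atTop

/-- Upper negative logarithmic spectral density. -/
def upperLDneg (t : ℝ) (B : ℕ → OpH) : ℝ :=
  limsup (fun N : ℕ => (countNeg t (B N) : ℝ) / Real.log N) atTop

/-- Lower negative logarithmic spectral density. -/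
def lowerLDneg (t : ℝ) (B : ℕ → OpH) : ℝ :=
  liminf (fun N : ℕ => (countNeg t (B N) : ℝ) / Real.log N) atTop

/-- `ω` is C^∞ on the circle away from the closed set `M` (so `singsupp ω ⊆ M`). -/
def SmoothOff (ω : ℂ → ℂ) (M : Set ℂ) : Prop :=
  ContDiffOn ℝ (⊤ : ℕ∞) (fun θ : ℝ => ω (Complex.exp ((θ : ℂ) * Complex.I)))
    {θ : ℝ | Complex.exp ((θ : ℂ) * Complex.I) ∉ M}

/-- Fourier coefficients of the function `sign (Im v)` on the circle. -/
def sgnCoeff (k : ℤ) : ℂ :=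
  (∫ θ in (0:ℝ)..(2 * Real.pi),
      ((Real.sign (Real.sin θ) : ℝ) : ℂ) * Complex.exp (-(k : ℂ) * (θ : ℂ) * Complex.I)) /
    ((2 * Real.pi : ℝ) : ℂ)

/-- The argument of `v`, normalized to `[0, 2π)`. -/
def thetaOf (v : ℂ) : ℝ :=
  if 0 ≤ Complex.arg v then Complex.arg v else Complex.arg v + 2 * Real.pi

/-- The model symbol `γ(e^{iθ}) = i π⁻¹ e^{-iθ} (π - θ)`, `θ ∈ [0, 2π)`. -/
def gammaSym (v : ℂ) : ℂ :=
  Complex.I * ((Real.pi : ℂ))⁻¹ * starRingEnd ℂ v * ((Real.pi : ℂ) - (thetaOf v : ℂ))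

/-- Trace of an operator on ℓ²(ℤ₊) as the sum of diagonal entries. -/
def opTrace (X : OpH) : ℂ := ∑' j : ℕ, entry X j j

/-! The multipliers `τ_N ⋆ ·` are uniformly bounded by (A), and their entries `τ(j/N, k/N)`
tend to `τ(0,0) = 1`. So each column `(τ_N ⋆ A - A) e_k` tends to `0` by dominated convergence
in `ℓ²`, and the uniform bound spreads this from the span of the `e_k` to all of `ℓ²`.
If `A` is compact, its finite sections `P_M A P_M` converge to `A` in norm. A finite section has
finitely many entries, so `τ_N ⋆ (P_M A P_M) → P_M A P_M` in norm, and the uniform bound controls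
the multiplier on the remainder `A - P_M A P_M`. -/

open InnerProductSpace
open scoped InnerProduct

theorem tendsto_zero_of_eventually_le_add {ι κ : Type*} {l : Filter ι} {l' : Filter κ} [l'.NeBot]
    {u : ι → ℝ} {a : κ → ℝ} {b : κ → ι → ℝ} (hu : ∀ i, 0 ≤ u i) (ha : Tendsto a l' (𝓝 0))
    (hb : ∀ᶠ m in l', Tendsto (b m) l (𝓝 0)) (h : ∀ᶠ m in l', ∀ᶠ i in l, u i ≤ a m + b m i) :
    Tendsto u l (𝓝 0) := by
  refine tendsto_order.2 ⟨fun ε hε => .of_forall fun i => hε.trans_le (hu i), fun ε hε => ?_⟩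
  obtain ⟨m, ham, hbm, hm⟩ := ((ha.eventually (gt_mem_nhds (half_pos hε))).and (hb.and h)).exists
  filter_upwards [hm, hbm.eventually (gt_mem_nhds (half_pos hε))] with i hi hbi
  linarith

theorem lp.tendsto_zero_of_dominated {α ι : Type*} {E : ι → Type*} [∀ i, NormedAddCommGroup (E i)]
    {p : ENNReal} [Fact (1 ≤ p)] (hp : p ≠ ⊤) {l : Filter α} {x : α → lp E p} (g : lp E p)
    (hx : ∀ i, Tendsto (fun a => x a i) l (𝓝 0)) (hg : ∀ᶠ a in l, ∀ i, ‖x a i‖ ≤ ‖g i‖) :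
    Tendsto x l (𝓝 0) := by
  have hp0 : 0 < p.toReal := ENNReal.toReal_pos (zero_lt_one.trans_le Fact.out).ne' hp
  have hpow : Tendsto (fun a => ‖x a‖ ^ p.toReal) l (𝓝 0) := by
    simp_rw [lp.norm_rpow_eq_tsum hp0]
    have := tendsto_tsum_of_dominated_convergence (g := fun _ => (0 : ℝ))
      ((lp.memℓp g).summable hp0)
      (fun i => by simpa [Real.zero_rpow hp0.ne'] using ((hx i).norm.rpow_const (.inr hp0.le)))
      (hg.mono fun a ha i => by
        rw [Real.norm_of_nonneg (by positivity)]
        exact Real.rpow_le_rpow (norm_nonneg _) (ha i) hp0.le)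
    rwa [tsum_zero] at this
  rw [tendsto_zero_iff_norm_tendsto_zero]
  simpa [Real.rpow_rpow_inv (norm_nonneg _) hp0.ne', Real.zero_rpow (inv_ne_zero hp0.ne')]
    using hpow.rpow_const (p := p.toReal⁻¹) (.inr (inv_nonneg.2 hp0.le))

section OperatorFamilies

variable {ι 𝕜 E F : Type*} {l : Filter ι}

theorem ContinuousLinearMap.tendsto_apply_zero_of_dense_span [NontriviallyNormedField 𝕜]
    [NormedAddCommGroup E] [NormedSpace 𝕜 E] [NormedAddCommGroup F] [NormedSpace 𝕜 F]
    {T : ι → E →L[𝕜] F} {s : Set E} (hs : Dense (Submodule.span 𝕜 s : Set E)) {D : ℝ}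
    (hT : ∀ᶠ i in l, ‖T i‖ ≤ D) (h : ∀ v ∈ s, Tendsto (fun i => T i v) l (𝓝 0)) (x : E) :
    Tendsto (fun i => T i x) l (𝓝 0) := by
  have hspan : ∀ v ∈ Submodule.span 𝕜 s, Tendsto (fun i => T i v) l (𝓝 0) := by
    intro v hv
    induction hv using Submodule.span_induction with
    | mem v hv => exact h v hv
    | zero => simpa using tendsto_const_nhds
    | add v w _ _ hv hw => simpa using hv.add hw
    | smul c v _ hv => simpa using hv.const_smul c
  have : (𝓝[Submodule.span 𝕜 s] x).NeBot := mem_closure_iff_nhdsWithin_neBot.1 (hs x)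
  rw [tendsto_zero_iff_norm_tendsto_zero]
  refine tendsto_zero_of_eventually_le_add (l' := 𝓝[Submodule.span 𝕜 s] x)
    (a := fun y => D * ‖x - y‖) (b := fun y i => ‖T i y‖) (fun _ => norm_nonneg _) ?_ ?_ ?_
  · have : Tendsto (fun y => D * ‖x - y‖) (𝓝 x) (𝓝 (D * ‖x - x‖)) :=
      (continuous_const.mul (continuous_const.sub continuous_id).norm).tendsto x
    simpa using this.mono_left nhdsWithin_le_nhds
  · filter_upwards [self_mem_nhdsWithin] with y hy
    simpa using (hspan y hy).norm
  · refine .of_forall fun y => ?_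
    filter_upwards [hT] with i hi
    calc ‖T i x‖ = ‖T i (x - y) + T i y‖ := by rw [← map_add, sub_add_cancel]
      _ ≤ ‖T i‖ * ‖x - y‖ + ‖T i y‖ := norm_add_le_of_le ((T i).le_opNorm _) le_rfl
      _ ≤ D * ‖x - y‖ + ‖T i y‖ := by gcongr

theorem ContinuousLinearMap.eventually_forall_norm_apply_lt_of_isCompact [NontriviallyNormedField 𝕜]
    [NormedAddCommGroup E] [NormedSpace 𝕜 E] [NormedAddCommGroup F] [NormedSpace 𝕜 F]
    {T : ι → E →L[𝕜] F} {D : ℝ} (hT : ∀ᶠ i in l, ‖T i‖ ≤ D)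
    (h : ∀ y, Tendsto (fun i => T i y) l (𝓝 0)) {S : Set E} (hS : IsCompact S) {ε : ℝ}
    (hε : 0 < ε) : ∀ᶠ i in l, ∀ y ∈ S, ‖T i y‖ < ε := by
  obtain ⟨t, -, ht, hcover⟩ := hS.finite_cover_balls (e := ε / 2 / (|D| + 1)) (by positivity)
  have hnet : ∀ᶠ i in l, ∀ z ∈ t, ‖T i z‖ < ε / 2 :=
    ht.eventually_all.2 fun z _ =>
      (tendsto_zero_iff_norm_tendsto_zero.1 (h z)).eventually (gt_mem_nhds (half_pos hε))
  filter_upwards [hT, hnet] with i hi hnet y hy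
  obtain ⟨z, hz, hyz⟩ := Set.mem_iUnion₂.1 (hcover hy)
  rw [Metric.mem_ball, dist_eq_norm] at hyz
  have hsmall : ‖T i‖ * ‖y - z‖ ≤ ε / 2 :=
    calc ‖T i‖ * ‖y - z‖ ≤ (|D| + 1) * (ε / 2 / (|D| + 1)) := by
          gcongr
          · linarith [le_abs_self D]
      _ = ε / 2 := by field_simp
  calc ‖T i y‖ = ‖T i (y - z) + T i z‖ := by rw [← map_add, sub_add_cancel]
    _ ≤ ‖T i‖ * ‖y - z‖ + ‖T i z‖ := norm_add_le_of_le ((T i).le_opNorm _) le_rfl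
    _ < ε := by linarith [hnet z hz]

theorem ContinuousLinearMap.tendsto_comp_of_isCompactOperator [RCLike 𝕜] {G : Type*}
    [NormedAddCommGroup E] [NormedSpace 𝕜 E] [NormedAddCommGroup F] [NormedSpace 𝕜 F]
    [NormedAddCommGroup G] [NormedSpace 𝕜 G] {K : E →L[𝕜] F} (hK : IsCompactOperator K)
    {T : ι → F →L[𝕜] G} {D : ℝ} (hT : ∀ᶠ i in l, ‖T i‖ ≤ D)
    (h : ∀ y, Tendsto (fun i => T i y) l (𝓝 0)) : Tendsto (fun i => T i ∘L K) l (𝓝 0) := by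
  obtain ⟨S, hS, hKS⟩ := hK.image_closedBall_subset_compact 1
  rw [NormedAddGroup.tendsto_nhds_zero]
  intro ε hε
  filter_upwards [ContinuousLinearMap.eventually_forall_norm_apply_lt_of_isCompact hT h hS
    (half_pos hε)] with i hi
  refine lt_of_le_of_lt ?_ (half_lt_self hε)
  exact ContinuousLinearMap.opNorm_le_of_unit_norm (half_pos hε).le fun x hx =>
    (hi (K x) (hKS ⟨x, by simp [hx], rfl⟩)).le

theorem ContinuousLinearMap.norm_mul_sq_le_of_isSelfAdjoint [RCLike 𝕜] [NormedAddCommGroup E]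
    [InnerProductSpace 𝕜 E] [CompleteSpace E] (A : E →L[𝕜] E) {Q : E →L[𝕜] E}
    (hQ : IsSelfAdjoint Q) (hQ1 : ‖Q‖ ≤ 1) : ‖A * Q‖ ^ 2 ≤ ‖Q * (A† * A)‖ :=
  calc ‖A * Q‖ ^ 2 = ‖Q * (A† * A) * Q‖ := by
        rw [sq, ← norm_adjoint_comp_self, mul_def, adjoint_comp, hQ.adjoint_eq]
        rfl
    _ ≤ ‖Q * (A† * A)‖ * ‖Q‖ := norm_mul_le _ _
    _ ≤ ‖Q * (A† * A)‖ := mul_le_of_le_one_right (norm_nonneg _) hQ1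

theorem tendsto_starProjection_mul_mul_of_isCompactOperator [RCLike 𝕜]
    [NormedAddCommGroup E] [InnerProductSpace 𝕜 E] [CompleteSpace E] {U : ι → Submodule 𝕜 E}
    [∀ i, (U i).HasOrthogonalProjection]
    (hU : ∀ x, Tendsto (fun i => (U i).starProjection x) l (𝓝 x))
    {A : E →L[𝕜] E} (hA : IsCompactOperator A) :
    Tendsto (fun i => (U i).starProjection * A * (U i).starProjection) l (𝓝 A) := by
  set P := fun i => (U i).starProjection
  set Q := fun i => (U i)ᗮ.starProjection
  have hQ : ∀ i, Q i = 1 - P i := fun i => Submodule.starProjection_orthogonal (U i)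
  have hQnorm : ∀ᶠ i in l, ‖Q i‖ ≤ 1 := .of_forall fun i => Submodule.starProjection_norm_le _
  have hQx : ∀ x, Tendsto (fun i => Q i x) l (𝓝 0) := fun x => by
    simpa [hQ] using (tendsto_const_nhds (x := x)).sub (hU x)
  have hA' : IsCompactOperator (A† * A) := by
    simpa [ContinuousLinearMap.coe_comp] using hA.clm_comp (A†)
  have hleft : Tendsto (fun i => ‖Q i * A‖) l (𝓝 0) := tendsto_zero_iff_norm_tendsto_zero.1
    (ContinuousLinearMap.tendsto_comp_of_isCompactOperator hA hQnorm hQx)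
  have hright : Tendsto (fun i => √‖Q i * (A† * A)‖) l (𝓝 0) := by
    have := tendsto_zero_iff_norm_tendsto_zero.1
      (ContinuousLinearMap.tendsto_comp_of_isCompactOperator hA' hQnorm hQx)
    simpa [← ContinuousLinearMap.mul_def] using this.sqrt
  rw [tendsto_iff_norm_sub_tendsto_zero]
  refine squeeze_zero (fun _ => norm_nonneg _) (fun i => ?_) (by simpa using hleft.add hright)
  have hdecomp : P i * A * P i - A = -(Q i * A + P i * (A * Q i)) := by
    rw [hQ]; noncomm_ring
  have hAQ : ‖A * Q i‖ ≤ √‖Q i * (A† * A)‖ := Real.le_sqrt_of_sq_le <|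
    A.norm_mul_sq_le_of_isSelfAdjoint (isSelfAdjoint_starProjection _)
      (Submodule.starProjection_norm_le _)
  calc ‖P i * A * P i - A‖ ≤ ‖Q i * A‖ + ‖P i‖ * ‖A * Q i‖ := by
        rw [hdecomp, norm_neg]
        exact norm_add_le_of_le le_rfl (norm_mul_le _ _)
    _ ≤ ‖Q i * A‖ + √‖Q i * (A† * A)‖ := by
        gcongr
        exact (mul_le_of_le_one_left (norm_nonneg _) (Submodule.starProjection_norm_le _)).trans hAQ

end OperatorFamilies

def stdBasis (k : ℕ) : Hl2 := lp.single 2 k 1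

theorem coe_default_hilbertBasis : ⇑(default : HilbertBasis ℕ ℂ Hl2) = stdBasis :=
  funext fun k => by rw [← HilbertBasis.repr_symm_single]; rfl

theorem orthonormal_stdBasis : Orthonormal ℂ stdBasis :=
  coe_default_hilbertBasis ▸ HilbertBasis.orthonormal _

theorem dense_span_stdBasis : Dense (Submodule.span ℂ (Set.range stdBasis) : Set Hl2) := by
  rw [← coe_default_hilbertBasis]
  exact Submodule.dense_iff_topologicalClosure_eq_top.2 (HilbertBasis.dense_span _)

theorem norm_stdBasis (k : ℕ) : ‖stdBasis k‖ = 1 := orthonormal_stdBasis.1 k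

theorem inner_stdBasis_left (k : ℕ) (v : Hl2) : inner ℂ (stdBasis k) v = v k := by
  simp [stdBasis, lp.inner_single_left]

theorem entry_eq_apply (A : OpH) (j k : ℕ) : entry A j k = A (stdBasis k) j :=
  inner_stdBasis_left j _

theorem entry_add (A B : OpH) (j k : ℕ) : entry (A + B) j k = entry A j k + entry B j k := by
  simp [entry_eq_apply]

theorem entry_sub (A B : OpH) (j k : ℕ) : entry (A - B) j k = entry A j k - entry B j k := by
  simp [entry_eq_apply]

theorem entry_smul (c : ℂ) (A : OpH) (j k : ℕ) : entry (c • A) j k = c * entry A j k := by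
  simp [entry_eq_apply]

theorem entry_sum {ι : Type*} (s : Finset ι) (A : ι → OpH) (j k : ℕ) :
    entry (∑ i ∈ s, A i) j k = ∑ i ∈ s, entry (A i) j k := by
  simp only [entry_eq_apply, FunLike.coe_sum, Finset.sum_apply, lp.coeFn_sum]

theorem norm_entry_le (A : OpH) (j k : ℕ) : ‖entry A j k‖ ≤ ‖A‖ := by
  calc ‖entry A j k‖ ≤ ‖stdBasis j‖ * ‖A (stdBasis k)‖ := norm_inner_le_norm _ _
    _ ≤ ‖A‖ * ‖stdBasis k‖ := by rw [norm_stdBasis, one_mul]; exact A.le_opNorm _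
    _ = ‖A‖ := by rw [norm_stdBasis, mul_one]

theorem eq_of_entry_eq {A B : OpH} (h : ∀ j k, entry A j k = entry B j k) : A = B := by
  refine ContinuousLinearMap.ext_on dense_span_stdBasis ?_
  rintro _ ⟨k, rfl⟩
  ext j
  simpa [entry_eq_apply] using h j k

theorem entry_rankOne_stdBasis (a b j k : ℕ) :
    entry (rankOne ℂ (stdBasis a) (stdBasis b)) j k =
      if j = a ∧ k = b then 1 else 0 := by
  rw [entry, ← stdBasis, ← stdBasis, inner_right_rankOne_apply,
    orthonormal_iff_ite.1 orthonormal_stdBasis, orthonormal_iff_ite.1 orthonormal_stdBasis]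
  by_cases hj : j = a <;> by_cases hk : k = b <;> simp [hj, hk, eq_comm (a := b)]

def finiteMatrixOp (s : Finset (ℕ × ℕ)) (c : ℕ × ℕ → ℂ) : OpH :=
  ∑ p ∈ s, c p • rankOne ℂ (stdBasis p.1) (stdBasis p.2)

theorem entry_finiteMatrixOp (s : Finset (ℕ × ℕ)) (c : ℕ × ℕ → ℂ) (j k : ℕ) :
    entry (finiteMatrixOp s c) j k = if (j, k) ∈ s then c (j, k) else 0 := by
  have hcond : ∀ p : ℕ × ℕ, (j = p.1 ∧ k = p.2) ↔ (j, k) = p := fun p => by simp [Prod.ext_iff]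
  simp only [finiteMatrixOp, entry_sum, entry_smul, entry_rankOne_stdBasis, hcond, mul_ite,
    mul_one, mul_zero, Finset.sum_ite_eq]

theorem norm_finiteMatrixOp_le (s : Finset (ℕ × ℕ)) (c : ℕ × ℕ → ℂ) :
    ‖finiteMatrixOp s c‖ ≤ ∑ p ∈ s, ‖c p‖ :=
  (norm_sum_le _ _).trans <| Finset.sum_le_sum fun p _ => by
    simp [norm_smul, orthonormal_stdBasis.1]

theorem finiteMatrixOp_sub (s : Finset (ℕ × ℕ)) (c c' : ℕ × ℕ → ℂ) :
    finiteMatrixOp s c - finiteMatrixOp s c' = finiteMatrixOp s fun p => c p - c' p := by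
  simp [finiteMatrixOp, sub_smul, Finset.sum_sub_distrib]

theorem isSchurMul_finiteMatrixOp (σ : ℝ → ℝ → ℂ) (s : Finset (ℕ × ℕ)) (c : ℕ × ℕ → ℂ) :
    IsSchurMul σ (finiteMatrixOp s c) (finiteMatrixOp s fun p => σ p.1 p.2 * c p) := by
  intro j k
  simp only [entry_finiteMatrixOp]
  split_ifs <;> simp

theorem IsSchurMul.unique {σ : ℝ → ℝ → ℂ} {A B B' : OpH} (h : IsSchurMul σ A B)
    (h' : IsSchurMul σ A B') : B = B' :=
  eq_of_entry_eq fun j k => (h j k).trans (h' j k).symm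

theorem IsSchurMul.add {σ : ℝ → ℝ → ℂ} {A A' B B' : OpH} (h : IsSchurMul σ A B)
    (h' : IsSchurMul σ A' B') : IsSchurMul σ (A + A') (B + B') := fun j k => by
  rw [entry_add, entry_add, h, h', mul_add]

theorem norm_le_of_forall_exists_isSchurMul {σ : ℝ → ℝ → ℂ} {C : ℝ}
    (h : ∀ A : OpH, ∃ B, IsSchurMul σ A B ∧ ‖B‖ ≤ C * ‖A‖) (j k : ℕ) : ‖σ j k‖ ≤ C := by
  obtain ⟨B, hB, hBC⟩ := h (rankOne ℂ (stdBasis j) (stdBasis k))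
  calc ‖σ j k‖ = ‖entry B j k‖ := by simp [hB j k, entry_rankOne_stdBasis]
    _ ≤ ‖B‖ := norm_entry_le B j k
    _ ≤ C := by simpa [norm_stdBasis] using hBC

def truncSubspace (M : ℕ) : Submodule ℂ Hl2 := Submodule.span ℂ (stdBasis '' Set.Iio M)

instance (M : ℕ) : FiniteDimensional ℂ (truncSubspace M) :=
  FiniteDimensional.span_of_finite ℂ ((Set.finite_Iio M).image _)

theorem starProjection_truncSubspace_stdBasis (M k : ℕ) :
    (truncSubspace M).starProjection (stdBasis k) = if k < M then stdBasis k else 0 := by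
  split_ifs with hk
  · exact Submodule.starProjection_eq_self_iff.2 (Submodule.subset_span ⟨k, hk, rfl⟩)
  · refine (Submodule.starProjection_apply_eq_zero_iff _).2 ?_
    refine (Submodule.isOrtho_span.2 ?_).ge (Submodule.subset_span (Set.mem_singleton _))
    rintro _ ⟨i, hi, rfl⟩ _ rfl
    rw [orthonormal_iff_ite.1 orthonormal_stdBasis, if_neg]
    rintro rfl
    exact hk hi

theorem tendsto_starProjection_truncSubspace (x : Hl2) :
    Tendsto (fun M => (truncSubspace M).starProjection x) atTop (𝓝 x) := by
  refine Submodule.starProjection_tendsto_self truncSubspace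
    (fun M N h => Submodule.span_mono (Set.image_mono (Set.Iio_subset_Iio h))) x ?_
  have hsup : ⨆ M, truncSubspace M = Submodule.span ℂ (Set.range stdBasis) := by
    simp_rw [truncSubspace, ← Submodule.span_iUnion, ← Set.image_iUnion, Set.iUnion_Iio,
      Set.image_univ]
  rw [hsup, Submodule.dense_iff_topologicalClosure_eq_top.1 dense_span_stdBasis]

theorem starProjection_mul_mul_truncSubspace (A : OpH) (M : ℕ) :
    (truncSubspace M).starProjection * A * (truncSubspace M).starProjection =
      finiteMatrixOp (Finset.range M ×ˢ Finset.range M) fun p => entry A p.1 p.2 := by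
  refine eq_of_entry_eq fun j k => ?_
  set P := (truncSubspace M).starProjection
  change inner ℂ (stdBasis j) (P (A (P (stdBasis k)))) = _
  rw [entry_finiteMatrixOp, ← Submodule.inner_starProjection_left_eq_right,
    starProjection_truncSubspace_stdBasis, starProjection_truncSubspace_stdBasis]
  simp only [Finset.mem_product, Finset.mem_range]
  split_ifs <;> simp_all [entry, stdBasis]

theorem tendsto_finiteMatrixOp_truncation {A : OpH} (hA : IsCompactOperator A) :
    Tendsto (fun M => finiteMatrixOp (Finset.range M ×ˢ Finset.range M) fun p => entry A p.1 p.2)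
      atTop (𝓝 A) := by
  simpa only [starProjection_mul_mul_truncSubspace] using
    tendsto_starProjection_mul_mul_of_isCompactOperator tendsto_starProjection_truncSubspace hA

theorem tendsto_scaleT {τ : ℝ → ℝ → ℂ}
    (hcont : ContinuousWithinAt (fun q : ℝ × ℝ => τ q.1 q.2) (Set.Ici 0 ×ˢ Set.Ici 0) (0, 0))
    {x y : ℝ} (hx : 0 ≤ x) (hy : 0 ≤ y) :
    Tendsto (fun N : ℕ => scaleT τ N x y) atTop (𝓝 (τ 0 0)) :=
  hcont.tendsto.comp <| tendsto_nhdsWithin_iff.2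
    ⟨(tendsto_const_div_atTop_nhds_zero_nat x).prodMk_nhds
        (tendsto_const_div_atTop_nhds_zero_nat y),
      .of_forall fun N => ⟨div_nonneg hx N.cast_nonneg, div_nonneg hy N.cast_nonneg⟩⟩

section SchurMultiplierSequence

variable {ι : Type*} {l : Filter ι} {σ : ι → ℝ → ℝ → ℂ} {C : ℝ} {A : OpH} {B : ι → OpH}
  (hlim : ∀ j k : ℕ, Tendsto (fun i => σ i j k) l (𝓝 1))
  (hbound : ∀ᶠ i in l, ∀ X : OpH, ∃ Y, IsSchurMul (σ i) X Y ∧ ‖Y‖ ≤ C * ‖X‖)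
  (hB : ∀ᶠ i in l, IsSchurMul (σ i) A (B i))
include hlim hbound hB

theorem tendsto_sub_apply_stdBasis_of_isSchurMul (k : ℕ) :
    Tendsto (fun i => (B i - A) (stdBasis k)) l (𝓝 0) := by
  have hcoord : ∀ i, IsSchurMul (σ i) A (B i) →
      ∀ j, (B i - A) (stdBasis k) j = (σ i j k - 1) * entry A j k := by
    intro i hBi j
    rw [← entry_eq_apply, entry_sub, hBi]
    ring
  refine lp.tendsto_zero_of_dominated ENNReal.ofNat_ne_top (((C + 1 : ℝ) : ℂ) • A (stdBasis k))
    (fun j => ?_) ?_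
  · have : Tendsto (fun i => (σ i j k - 1) * entry A j k) l (𝓝 0) := by
      simpa using ((hlim j k).sub_const 1).mul_const (entry A j k)
    exact this.congr' (hB.mono fun i hBi => (hcoord i hBi j).symm)
  · filter_upwards [hbound, hB] with i hbd hBi j
    rw [hcoord i hBi, lp.coeFn_smul, Pi.smul_apply, ← entry_eq_apply, norm_mul, norm_smul]
    gcongr
    calc ‖σ i j k - 1‖ ≤ ‖σ i j k‖ + ‖(1 : ℂ)‖ := norm_sub_le _ _
      _ ≤ C + 1 := by rw [norm_one]; linarith [norm_le_of_forall_exists_isSchurMul hbd j k]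
      _ ≤ ‖((C + 1 : ℝ) : ℂ)‖ := by rw [Complex.norm_real]; exact le_abs_self _

theorem tendsto_apply_of_isSchurMul (x : Hl2) : Tendsto (fun i => B i x) l (𝓝 (A x)) := by
  have hnorm : ∀ᶠ i in l, ‖B i - A‖ ≤ C * ‖A‖ + ‖A‖ := by
    filter_upwards [hbound, hB] with i hbd hBi
    obtain ⟨Y, hY, hYC⟩ := hbd A
    rw [IsSchurMul.unique hBi hY]
    exact norm_sub_le_of_le hYC le_rfl
  have := ContinuousLinearMap.tendsto_apply_zero_of_dense_span dense_span_stdBasis hnorm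
    (Set.forall_mem_range.2 (tendsto_sub_apply_stdBasis_of_isSchurMul hlim hbound hB)) x
  simpa using this.add_const (A x)

theorem tendsto_of_isSchurMul_of_isCompactOperator (hA : IsCompactOperator A) :
    Tendsto B l (𝓝 A) := by
  set s := fun M : ℕ => Finset.range M ×ˢ Finset.range M
  set F := fun M => finiteMatrixOp (s M) fun p => entry A p.1 p.2
  rw [tendsto_iff_norm_sub_tendsto_zero]
  refine tendsto_zero_of_eventually_le_add (l' := atTop) (a := fun M => (C + 1) * ‖A - F M‖)
    (b := fun M i => ∑ p ∈ s M, ‖σ i p.1 p.2 * entry A p.1 p.2 - entry A p.1 p.2‖)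
    (fun _ => norm_nonneg _) ?_ (.of_forall fun M => ?_) (.of_forall fun M => ?_)
  · have := (tendsto_iff_norm_sub_tendsto_zero.1 (tendsto_finiteMatrixOp_truncation hA)).const_mul
      (C + 1)
    simpa [norm_sub_rev] using this
  · simpa using tendsto_finsetSum (s M) fun p _ =>
      (((hlim p.1 p.2).mul_const (entry A p.1 p.2)).sub_const (entry A p.1 p.2)).norm
  · filter_upwards [hbound, hB] with i hbd hBi
    obtain ⟨E, hE, hEC⟩ := hbd (A - F M)
    set G := finiteMatrixOp (s M) fun p => σ i p.1 p.2 * entry A p.1 p.2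
    have hAFF : IsSchurMul (σ i) (A - F M + F M) (E + G) :=
      IsSchurMul.add hE (isSchurMul_finiteMatrixOp (σ i) (s M) _)
    rw [sub_add_cancel] at hAFF
    have hsplit : B i = E + G := IsSchurMul.unique hBi hAFF
    have hG : ‖G - F M‖ ≤ ∑ p ∈ s M, ‖σ i p.1 p.2 * entry A p.1 p.2 - entry A p.1 p.2‖ := by
      rw [finiteMatrixOp_sub]
      exact norm_finiteMatrixOp_le _ _
    calc ‖B i - A‖ = ‖(E - (A - F M)) + (G - F M)‖ := by rw [hsplit]; abel_nf
      _ ≤ ‖E‖ + ‖A - F M‖ + ‖G - F M‖ := norm_add_le_of_le (norm_sub_le _ _) le_rfl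
      _ ≤ _ := by linarith

end SchurMultiplierSequence

/-- if `τ` is continuous at `(0,0)` with `τ(0,0)=1` and satisfies (A),
then `τ_N ⋆ A → A` strongly for every bounded `A`, and in norm when `A` is compact. -/
theorem schur_truncation_convergence
    (τ : ℝ → ℝ → ℂ)
    (hcont : ContinuousWithinAt (fun q : ℝ × ℝ => τ q.1 q.2) (Set.Ici 0 ×ˢ Set.Ici 0) (0, 0))
    (h00 : τ 0 0 = 1) (hA : AssumptionA τ)
    (A : OpH) (B : ℕ → OpH) (hBmul : ∀ N : ℕ, 1 ≤ N → IsSchurMul (scaleT τ N) A (B N)) :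
    (∀ x : Hl2, Tendsto (fun N : ℕ => B N x) atTop (𝓝 (A x))) ∧
    (IsCompactOperator ⇑A → Tendsto (fun N : ℕ => ‖B N - A‖) atTop (𝓝 0)) := by
  obtain ⟨C, hC⟩ := hA
  have hbound : ∀ᶠ N in atTop, ∀ X : OpH, ∃ Y, IsSchurMul (scaleT τ N) X Y ∧ ‖Y‖ ≤ C * ‖X‖ :=
    eventually_atTop.2 ⟨1, hC⟩
  have hB : ∀ᶠ N in atTop, IsSchurMul (scaleT τ N) A (B N) := eventually_atTop.2 ⟨1, hBmul⟩
  have hlim : ∀ j k : ℕ, Tendsto (fun N : ℕ => scaleT τ N j k) atTop (𝓝 1) := fun j k =>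
    h00 ▸ tendsto_scaleT hcont j.cast_nonneg k.cast_nonneg
  refine ⟨tendsto_apply_of_isSchurMul hlim hbound hB, fun hK => ?_⟩
  exact tendsto_iff_norm_sub_tendsto_zero.1
    (tendsto_of_isSchurMul_of_isCompactOperator hlim hbound hB hK)
end
end

section
/- Let σ be a bounded function on [0,∞)² satisfying Assumption (C), with σ(0,0) = 0, and such that for some ε > 0 and some β > 1/2 there exists C_β > 0 with |σ(x,y)| ≤ C_β |log(x+y)|^{−β} for all 0 ≤ x,y ≤ ε. Then for every A ∈ ℬ₀ and every N ≥ 1, σ_N ⋆ A is Hilbert–Schmidt, and there is a constant C, independent of N, with ‖σ_N ⋆ A‖_{𝔖₂} ≤ C. -/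
open Complex Filter Topology MeasureTheory

noncomputable section

/-!
With `γ = min α β > 1/2`, the two decay assumptions combine into
`|σ(x,y)| ≤ K (1 + |log(x+y)|)^{-γ}` on the whole quadrant, so for `A ∈ ℬ₀` with constant `M`
the entries of `σ_N ⋆ A` on the antidiagonal `j + k = s` are at most
`K M (1 + |log(s/N)|)^{-γ} / (s+1)`. Summing over the `s + 1` entries of each antidiagonal,
`‖σ_N ⋆ A‖²_{𝔖₂} ≤ K² M² Σ_s (1 + |log(s/N)|)^{-2γ} / (s+1)`. Since
`1/(s+1) ≤ log(s+1) - log s`, this is dominated by a Riemann sum of the integral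
`∫ (1 + |u|)^{-2γ} du < ∞` in the variable `u = log(s/N)`, uniformly in `N`.
Finally, a square-summable matrix is the matrix of a bounded operator, so `σ_N ⋆ A` exists.
-/

open Finset

lemma memℓp_two_of_summable_norm_sq {ι : Type*} {E : ι → Type*} [∀ i, NormedAddCommGroup (E i)]
    {f : ∀ i, E i} (hf : Summable fun i => ‖f i‖ ^ 2) : Memℓp f 2 :=
  memℓp_gen (by simpa using hf)

lemma lp.norm_sq_eq_tsum {ι : Type*} {E : ι → Type*} [∀ i, NormedAddCommGroup (E i)]
    (x : lp E 2) : ‖x‖ ^ 2 = ∑' i, ‖x i‖ ^ 2 := by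
  simpa using lp.norm_rpow_eq_tsum (p := 2) (by norm_num) x

theorem exists_entry_eq_of_summable_norm_sq (b : ℕ → ℕ → ℂ)
    (hb : Summable fun q : ℕ × ℕ => ‖b q.1 q.2‖ ^ 2) :
    ∃ B : OpH, ∀ j k, entry B j k = b j k := by
  -- row `j` is conjugated so that `(B x) j = ⟪row j, x⟫`
  let row : ℕ → Hl2 := fun j =>
    ⟨fun k => starRingEnd ℂ (b j k),
      memℓp_two_of_summable_norm_sq (by simpa using hb.prod_factor j)⟩
  have hrow (j : ℕ) : ‖row j‖ ^ 2 = ∑' k, ‖b j k‖ ^ 2 := by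
    simp [lp.norm_sq_eq_tsum, row]
  have hinner (x : Hl2) (j : ℕ) : ‖inner ℂ (row j) x‖ ^ 2 ≤ (∑' k, ‖b j k‖ ^ 2) * ‖x‖ ^ 2 := by
    rw [← hrow, ← mul_pow]
    exact pow_le_pow_left₀ (norm_nonneg _) (norm_inner_le_norm _ _) 2
  have hsum (x : Hl2) : Summable fun j => ‖inner ℂ (row j) x‖ ^ 2 :=
    .of_nonneg_of_le (fun _ => by positivity) (hinner x) (hb.prod.mul_right _)
  let T : Hl2 →ₗ[ℂ] Hl2 :=
    { toFun := fun x => ⟨fun j => inner ℂ (row j) x, memℓp_two_of_summable_norm_sq (hsum x)⟩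
      map_add' := fun x y => by ext j; exact inner_add_right _ x y
      map_smul' := fun c x => by ext j; exact inner_smul_right _ x c }
  have hT (x : Hl2) : ‖T x‖ ≤ √(∑' j, ∑' k, ‖b j k‖ ^ 2) * ‖x‖ := by
    have hsq : ‖T x‖ ^ 2 ≤ (∑' j, ∑' k, ‖b j k‖ ^ 2) * ‖x‖ ^ 2 := by
      rw [lp.norm_sq_eq_tsum, ← tsum_mul_right]
      exact (hsum x).tsum_le_tsum (hinner x) (hb.prod.mul_right _)
    rw [← Real.sqrt_sq (norm_nonneg (T x)), ← Real.sqrt_sq (norm_nonneg x), ← Real.sqrt_mul']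
    · exact Real.sqrt_le_sqrt hsq
    · positivity
  refine ⟨T.mkContinuous _ hT, fun j k => ?_⟩
  simp [entry, lp.inner_single_left, lp.inner_single_right, T, row]

theorem summable_and_tsum_le_of_le_comp_add {f : ℕ × ℕ → ℝ} {g : ℕ → ℝ} {c : ℝ} (hf : 0 ≤ f)
    (hfg : ∀ j k, f (j, k) ≤ g (j + k)) (hg : ∀ m, ∑ s ∈ range m, (s + 1) * g s ≤ c) :
    Summable f ∧ ∑' q, f q ≤ c := by
  have hfin (u : Finset (ℕ × ℕ)) : ∑ q ∈ u, f q ≤ c := by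
    have hmaps : ∀ q ∈ u, q.1 + q.2 ∈ range (u.sup (fun q => q.1 + q.2) + 1) := fun q hq =>
      mem_range.2 (Nat.lt_succ_of_le (le_sup (f := fun q : ℕ × ℕ => q.1 + q.2) hq))
    rw [← sum_fiberwise_of_maps_to hmaps]
    refine le_trans (sum_le_sum fun s _ => ?_) (hg _)
    calc ∑ q ∈ u with q.1 + q.2 = s, f q
        ≤ ∑ q ∈ antidiagonal s, f q :=
          sum_le_sum_of_subset_of_nonneg (fun q hq => mem_antidiagonal.2 (mem_filter.1 hq).2)
            fun q _ _ => hf q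
      _ ≤ ∑ q ∈ antidiagonal s, g s :=
          sum_le_sum fun q hq => (mem_antidiagonal.1 hq) ▸ hfg q.1 q.2
      _ = (s + 1) * g s := by simp
  exact ⟨summable_of_sum_le hf hfin, (summable_of_sum_le hf hfin).tsum_le_of_sum_le hfin⟩

lemma inv_add_one_le_log_add_one_sub_log {t : ℝ} (ht : 0 < t) :
    (t + 1)⁻¹ ≤ Real.log (t + 1) - Real.log t := by
  have h := Real.one_sub_inv_le_log_of_pos (show 0 < (t + 1) / t by positivity)
  rw [Real.log_div (by positivity) ht.ne', inv_div, one_sub_div (by positivity)] at h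
  simpa using h

lemma log_add_one_sub_log_le_inv {t : ℝ} (ht : 0 < t) :
    Real.log (t + 1) - Real.log t ≤ t⁻¹ := by
  have h := Real.log_le_sub_one_of_pos (show 0 < (t + 1) / t by positivity)
  rw [Real.log_div (by positivity) ht.ne', add_div, div_self ht.ne'] at h
  simpa using h

lemma continuous_rpow_neg_one_add_abs (r : ℝ) :
    Continuous fun u : ℝ => (1 + |u|) ^ (-r) :=
  (continuous_const.add continuous_abs).rpow_const fun u =>
    .inl (by positivity : (0 : ℝ) < 1 + |u|).ne'

lemma sub_mul_rpow_neg_one_add_abs_le_integral {r x y : ℝ} (hr : 0 ≤ r) (hxy : x ≤ y)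
    (hyx : y ≤ x + 1) :
    (y - x) * (1 + |x|) ^ (-r) ≤ 2 ^ r * ∫ u in x..y, (1 + |u|) ^ (-r) := by
  have hlow : ∀ u ∈ Set.Icc x y, 2 ^ (-r) * (1 + |x|) ^ (-r) ≤ (1 + |u|) ^ (-r) := by
    rintro u ⟨hxu, huy⟩
    rw [← Real.mul_rpow (by norm_num) (by positivity)]
    exact Real.rpow_le_rpow_of_nonpos (by positivity)
      (by cases abs_cases u <;> cases abs_cases x <;> linarith) (by linarith)
  have hint := intervalIntegral.integral_mono_on hxy (intervalIntegrable_const (μ := volume))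
    ((continuous_rpow_neg_one_add_abs r).intervalIntegrable x y) hlow
  rw [intervalIntegral.integral_const, smul_eq_mul] at hint
  calc (y - x) * (1 + |x|) ^ (-r) = 2 ^ r * ((y - x) * (2 ^ (-r) * (1 + |x|) ^ (-r))) := by
        rw [Real.rpow_neg (x := 2) (by norm_num), mul_left_comm,
          mul_inv_cancel_left₀ (by positivity)]
    _ ≤ 2 ^ r * ∫ u in x..y, (1 + |u|) ^ (-r) := by gcongr

theorem exists_sum_range_rpow_neg_one_add_abs_log_div_le {r : ℝ} (hr : 1 < r) :
    ∃ C, ∀ N : ℕ, N ≠ 0 → ∀ m : ℕ,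
      ∑ s ∈ range m, (1 + |Real.log (s / N)|) ^ (-r) / (s + 1) ≤ C := by
  have hint : Integrable fun u : ℝ => (1 + |u|) ^ (-r) := by
    simpa using integrable_one_add_norm (E := ℝ) (μ := volume) (by simpa using hr)
  have hnonneg : ∀ u : ℝ, 0 ≤ (1 + |u|) ^ (-r) := fun u => by positivity
  have hI : 0 ≤ ∫ u : ℝ, (1 + |u|) ^ (-r) := integral_nonneg hnonneg
  refine ⟨1 + 2 ^ r * ∫ u, (1 + |u|) ^ (-r), fun N hN m => ?_⟩
  set x : ℕ → ℝ := fun k => Real.log ((k + 1) / N)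
  have hstep (k : ℕ) : x (k + 1) - x k = Real.log ((k + 1 : ℝ) + 1) - Real.log (k + 1) := by
    simp only [x]
    push_cast
    rw [Real.log_div (by positivity) (by positivity), Real.log_div (by positivity) (by positivity)]
    ring
  have hterm (k : ℕ) : (1 + |Real.log (((k + 1 : ℕ) : ℝ) / N)|) ^ (-r) / (((k + 1 : ℕ) : ℝ) + 1)
      ≤ 2 ^ r * ∫ u in x k..x (k + 1), (1 + |u|) ^ (-r) := by
    have hk : (0 : ℝ) < k + 1 := by positivity
    have hlow := inv_add_one_le_log_add_one_sub_log hk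
    have hup := (log_add_one_sub_log_le_inv hk).trans (inv_le_one_of_one_le₀ (by simp))
    have hpos : (0 : ℝ) < ((k : ℝ) + 1 + 1)⁻¹ := by positivity
    refine le_trans ?_ (sub_mul_rpow_neg_one_add_abs_le_integral (by linarith)
      (by linarith [hstep k]) (by linarith [hstep k]))
    rw [div_eq_inv_mul, hstep]
    push_cast
    exact mul_le_mul_of_nonneg_right hlow (hnonneg _)
  cases m with
  | zero => simpa using by positivity
  | succ m =>
    have hsum : ∑ k ∈ range m, 2 ^ r * ∫ u in x k..x (k + 1), (1 + |u|) ^ (-r)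
        ≤ 2 ^ r * ∫ u, (1 + |u|) ^ (-r) := by
      rw [← mul_sum, intervalIntegral.sum_integral_adjacent_intervals
        fun k _ => (continuous_rpow_neg_one_add_abs r).intervalIntegrable _ _]
      have hx : x 0 ≤ x m := Real.log_le_log (by positivity) (by gcongr; simp)
      rw [intervalIntegral.integral_of_le hx]
      exact mul_le_mul_of_nonneg_left (setIntegral_le_integral hint (.of_forall hnonneg))
        (by positivity)
    have h0 : (1 + |Real.log (((0 : ℕ) : ℝ) / N)|) ^ (-r) / (((0 : ℕ) : ℝ) + 1) = 1 := by simp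
    rw [sum_range_succ', h0]
    linarith [sum_le_sum fun k (_ : k ∈ range m) => hterm k]

lemma rpow_neg_le_mul_rpow_neg {s t D e : ℝ} (ht : 0 < t) (hD : 0 < D) (he : 0 ≤ e)
    (h : t ≤ D * s) : s ^ (-e) ≤ D ^ e * t ^ (-e) := by
  have hs : 0 < s := pos_of_mul_pos_right (ht.trans_le h) hD.le
  have h' := Real.rpow_le_rpow_of_nonpos ht h (neg_nonpos.2 he)
  rw [Real.mul_rpow hD.le hs.le, Real.rpow_neg hD.le] at h'
  calc s ^ (-e) = D ^ e * ((D ^ e)⁻¹ * s ^ (-e)) := by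
        rw [mul_inv_cancel_left₀ (by positivity)]
    _ ≤ D ^ e * t ^ (-e) := by gcongr

lemma one_add_abs_log_le_mul_log_add_two {δ u : ℝ} (hδ : 0 < δ) (hδ1 : δ ≤ 1) (hu : 0 ≤ u)
    (hδu : u = 0 ∨ δ ≤ u) :
    1 + |Real.log u| ≤ ((1 + |Real.log δ|) / Real.log 2 + 1) * Real.log (u + 2) := by
  have hlog2 : 0 < Real.log 2 := Real.log_pos one_lt_two
  have hlog2u : Real.log 2 ≤ Real.log (u + 2) := Real.log_le_log two_pos (by linarith)
  have habs : |Real.log u| ≤ |Real.log δ| + Real.log (u + 2) := by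
    rcases hδu with rfl | hδu
    · simpa using by positivity
    have hu0 : 0 < u := hδ.trans_le hδu
    rcases le_total u 1 with hu1 | hu1
    · have := Real.log_le_log hδ hδu
      rw [abs_of_nonpos (Real.log_nonpos hu0.le hu1), abs_of_nonpos (Real.log_nonpos hδ.le hδ1)]
      linarith
    · have := Real.log_le_log hu0 (by linarith : u ≤ u + 2)
      rw [abs_of_nonneg (Real.log_nonneg hu1)]
      linarith [abs_nonneg (Real.log δ)]
  have : 1 + |Real.log δ| ≤ (1 + |Real.log δ|) / Real.log 2 * Real.log (u + 2) := by
    rw [div_mul_eq_mul_div, le_div_iff₀ hlog2]; gcongr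
  linarith

theorem exists_norm_le_rpow_neg_one_add_abs_log (σ : ℝ → ℝ → ℂ) (hC : AssumptionC σ)
    (hB : ∃ ε > (0 : ℝ), ∃ β > (1 / 2 : ℝ), ∃ C > (0 : ℝ), ∀ x y : ℝ,
      0 ≤ x → x ≤ ε → 0 ≤ y → y ≤ ε → ‖σ x y‖ ≤ C * |Real.log (x + y)| ^ (-β)) :
    ∃ γ > (1 / 2 : ℝ), ∃ K, ∀ x y : ℝ, 0 ≤ x → 0 ≤ y →
      ‖σ x y‖ ≤ K * (1 + |Real.log (x + y)|) ^ (-γ) := by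
  obtain ⟨α, hα, Cα, hCα, hσC⟩ := hC
  obtain ⟨ε, hε, β, hβ, Cβ, hCβ, hσB⟩ := hB
  set δ := min ε (Real.exp (-1))
  have hδ : 0 < δ := lt_min hε (Real.exp_pos _)
  have hlogδ : Real.log δ ≤ -1 :=
    (Real.log_le_log hδ (min_le_right _ _)).trans (Real.log_exp _).le
  set D := (1 + |Real.log δ|) / Real.log 2 + 1
  have hD : 0 < D := by have := Real.log_pos one_lt_two; positivity
  refine ⟨min α β, lt_min hα hβ, Cβ * 2 ^ β + Cα * D ^ α, fun x y hx hy => ?_⟩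
  set L := 1 + |Real.log (x + y)|
  have hL : 1 ≤ L := le_add_of_nonneg_right (abs_nonneg _)
  by_cases hsmall : 0 < x + y ∧ x + y ≤ δ
  · have hlog : Real.log (x + y) ≤ -1 := (Real.log_le_log hsmall.1 hsmall.2).trans hlogδ
    have hLle : L ≤ 2 * |Real.log (x + y)| := by
      simp only [L, abs_of_neg (by linarith : Real.log (x + y) < 0)]; linarith
    calc ‖σ x y‖ ≤ Cβ * |Real.log (x + y)| ^ (-β) :=
          hσB x y hx (by linarith [min_le_left ε (Real.exp (-1))]) hy
            (by linarith [min_le_left ε (Real.exp (-1))])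
      _ ≤ Cβ * (2 ^ β * L ^ (-β)) := by
          gcongr; exact rpow_neg_le_mul_rpow_neg (by linarith) two_pos (by linarith) hLle
      _ ≤ (Cβ * 2 ^ β) * L ^ (-min α β) := by
          rw [← mul_assoc]; gcongr; exact min_le_right _ _
      _ ≤ (Cβ * 2 ^ β + Cα * D ^ α) * L ^ (-min α β) := by
          gcongr; exact le_add_of_nonneg_right (by positivity)
  · have hLle : L ≤ D * Real.log (x + y + 2) := by
      refine one_add_abs_log_le_mul_log_add_two hδ ((min_le_right _ _).trans (by simp))
        (add_nonneg hx hy) ?_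
      rcases (add_nonneg hx hy).eq_or_lt with h0 | hpos
      exacts [.inl h0.symm, .inr (not_lt.1 fun h => hsmall ⟨hpos, h.le⟩)]
    calc ‖σ x y‖ ≤ Cα * Real.log (x + y + 2) ^ (-α) := hσC x y hx hy
      _ ≤ Cα * (D ^ α * L ^ (-α)) := by
          gcongr; exact rpow_neg_le_mul_rpow_neg (by linarith) hD (by linarith) hLle
      _ ≤ (Cα * D ^ α) * L ^ (-min α β) := by
          rw [← mul_assoc]; gcongr; exact min_le_left _ _
      _ ≤ (Cβ * 2 ^ β + Cα * D ^ α) * L ^ (-min α β) := by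
          gcongr; exact le_add_of_nonneg_left (by positivity)

theorem summable_and_tsum_norm_sq_schur_le {σ : ℝ → ℝ → ℂ} {A : OpH} {γ K M S : ℝ} {N : ℕ}
    (hσ : ∀ x y : ℝ, 0 ≤ x → 0 ≤ y → ‖σ x y‖ ≤ K * (1 + |Real.log (x + y)|) ^ (-γ))
    (hM : ∀ j k : ℕ, ((j : ℝ) + k + 1) * ‖entry A j k‖ ≤ M)
    (hS : ∀ m, ∑ s ∈ range m, (1 + |Real.log (s / N)|) ^ (-(2 * γ)) / (s + 1) ≤ S) :
    Summable (fun q : ℕ × ℕ => ‖scaleT σ N q.1 q.2 * entry A q.1 q.2‖ ^ 2) ∧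
      ∑' q : ℕ × ℕ, ‖scaleT σ N q.1 q.2 * entry A q.1 q.2‖ ^ 2 ≤ K ^ 2 * M ^ 2 * S := by
  let g : ℕ → ℝ := fun s => (K * (1 + |Real.log (s / N)|) ^ (-γ) * (M / (s + 1))) ^ 2
  refine summable_and_tsum_le_of_le_comp_add (g := g) (fun q => by positivity)
    (fun j k => ?_) (fun m => ?_)
  · have hjk : (0 : ℝ) < j + k + 1 := by positivity
    have hA : ‖entry A j k‖ ≤ M / (j + k + 1) := by rw [le_div_iff₀ hjk, mul_comm]; exact hM j k
    have hσ' := hσ (j / N) (k / N) (by positivity) (by positivity)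
    rw [← add_div] at hσ'
    simp only [norm_mul, g, scaleT, Nat.cast_add]
    exact pow_le_pow_left₀ (by positivity)
      (mul_le_mul hσ' hA (norm_nonneg _) ((norm_nonneg _).trans hσ')) 2
  · have hweight (s : ℕ) : (s + 1) * g s
        = K ^ 2 * M ^ 2 * ((1 + |Real.log (s / N)|) ^ (-(2 * γ)) / (s + 1)) := by
      rw [show -(2 * γ) = -γ * 2 by ring, Real.rpow_mul (by positivity), Real.rpow_two]
      simp only [g]
      field_simp
    simp only [hweight, ← mul_sum]
    exact mul_le_mul_of_nonneg_left (hS m) (by positivity)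

theorem uniform_hilbert_schmidt_bound_general
    (σ : ℝ → ℝ → ℂ) (hC : AssumptionC σ)
    (hB : ∃ ε > (0 : ℝ), ∃ β > (1 / 2 : ℝ), ∃ C > (0 : ℝ), ∀ x y : ℝ,
      0 ≤ x → x ≤ ε → 0 ≤ y → y ≤ ε →
        ‖σ x y‖ ≤ C * |Real.log (x + y)| ^ (-β))
    (A : OpH) (hA : MemB0 A) :
    ∃ C : ℝ, ∀ N : ℕ, 1 ≤ N →
      (∃ B : OpH, IsSchurMul (scaleT σ N) A B) ∧
      ∀ B : OpH, IsSchurMul (scaleT σ N) A B →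
        Summable (fun q : ℕ × ℕ => ‖entry B q.1 q.2‖ ^ 2) ∧
        Real.sqrt (∑' q : ℕ × ℕ, ‖entry B q.1 q.2‖ ^ 2) ≤ C := by
  obtain ⟨γ, hγ, K, hσ⟩ := exists_norm_le_rpow_neg_one_add_abs_log σ hC hB
  obtain ⟨S, hS⟩ := exists_sum_range_rpow_neg_one_add_abs_log_div_le (r := 2 * γ) (by linarith)
  obtain ⟨M, hM⟩ := hA
  refine ⟨√(K ^ 2 * M ^ 2 * S), fun N hN => ?_⟩
  obtain ⟨hsum, htsum⟩ := summable_and_tsum_norm_sq_schur_le hσ hM (hS N (by omega))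
  obtain ⟨B, hBentry⟩ :=
    exists_entry_eq_of_summable_norm_sq (fun j k => scaleT σ N j k * entry A j k) hsum
  refine ⟨⟨B, hBentry⟩, fun B' hB' => ?_⟩
  simp only [hB' _ _]
  exact ⟨hsum, Real.sqrt_le_sqrt htsum⟩

/-- if `σ` satisfies (C), vanishes at the origin with a logarithmic rate
`|σ(x,y)| ≤ C|log(x+y)|^{-β}`, `β > 1/2`, near the origin, then for `A ∈ ℬ₀` the Schur
products `σ_N ⋆ A` are Hilbert–Schmidt with uniformly bounded Hilbert–Schmidt norm. -/
theorem uniform_hilbert_schmidt_bound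
    (σ : ℝ → ℝ → ℂ) (hC : AssumptionC σ) (h00 : σ 0 0 = 0)
    (hB : ∃ ε > (0 : ℝ), ∃ β > (1 / 2 : ℝ), ∃ C > (0 : ℝ), ∀ x y : ℝ,
      0 ≤ x → x ≤ ε → 0 ≤ y → y ≤ ε →
        ‖σ x y‖ ≤ C * |Real.log (x + y)| ^ (-β))
    (A : OpH) (hA : MemB0 A) :
    ∃ C : ℝ, ∀ N : ℕ, 1 ≤ N →
      (∃ B : OpH, IsSchurMul (scaleT σ N) A B) ∧
      ∀ B : OpH, IsSchurMul (scaleT σ N) A B →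
        Summable (fun q : ℕ × ℕ => ‖entry B q.1 q.2‖ ^ 2) ∧
        Real.sqrt (∑' q : ℕ × ℕ, ‖entry B q.1 q.2‖ ^ 2) ≤ C :=
  uniform_hilbert_schmidt_bound_general σ hC hB A hA
end
end
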